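/- Almost surely, on the event that Γ^R lies below R and ψ(Γ^R(r)) ≥ 0, the geodesic Γ_n satisfies ψ(Γ_n(r)) ≥ 0. (That is, the event E^R is contained in the event E = {ψ(Γ_n(r)) ≥ 0}: increasing the weights in R from 0 can only increase the transversal fluctuation of the geodesic at 𝓛_r.) -/

import Mathlib

open MeasureTheory ProbabilityTheory

namespace LPP

/-- A configuration of vertex weights on `ℤ²`. -/
abbrev Config := (ℤ × ℤ) → ℝ

/-- One up-right step on the lattice: exactly one coordinate increases by 1. -/
def UpStep (p q : ℤ × ℤ) : Prop := q = (p.1 + 1, p.2) ∨ q = (p.1, p.2 + 1)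

/-- `γ` is an up-right path from `u` to `v`. -/
def IsUpRightPath (γ : List (ℤ × ℤ)) (u v : ℤ × ℤ) : Prop :=
  γ.head? = some u ∧ γ.getLast? = some v ∧ γ.Chain' UpStep

/-- Passage time of a path: the sum of the weights of its vertices except the terminal one. -/
noncomputable def pathTime (ω : Config) (γ : List (ℤ × ℤ)) : ℝ :=
  (γ.dropLast.map ω).sum

/-- Last passage time from `u` to `v`: the maximal passage time over up-right paths. -/
noncomputable def lpt (ω : Config) (u v : ℤ × ℤ) : ℝ :=
  sSup (pathTime ω '' {γ | IsUpRightPath γ u v})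

/-- `γ` is a geodesic from `u` to `v`: an up-right path attaining the last passage time. -/
def IsGeodesic (ω : Config) (γ : List (ℤ × ℤ)) (u v : ℤ × ℤ) : Prop :=
  IsUpRightPath γ u v ∧ pathTime ω γ = lpt ω u v

/-- The family `X` of vertex weights is an i.i.d. family of rate-1 exponential
random variables under the probability measure `P`. -/
def IsIIDExp {Ω : Type*} [MeasurableSpace Ω] (P : Measure Ω) (X : ℤ × ℤ → Ω → ℝ) : Prop :=
  (∀ u, Measurable (X u)) ∧
    iIndepFun X P ∧
    ∀ u, P.map (X u) = expMeasure 1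

/-- The translated rectangle
`R = {p : 2r/3 ≤ φ(p) ≤ 4r/3, 2(t+1)r^{2/3} - r^{2/3}/2 ≤ ψ(p) ≤ 2(t+1)r^{2/3} + r^{2/3}/2}`. -/
noncomputable def Rbox (r : ℕ) (t : ℝ) : Set (ℤ × ℤ) :=
  {p | 2 * (r : ℝ) / 3 ≤ ((p.1 + p.2 : ℤ) : ℝ) ∧ ((p.1 + p.2 : ℤ) : ℝ) ≤ 4 * (r : ℝ) / 3 ∧
       2 * (t + 1) * (r : ℝ) ^ ((2 : ℝ) / 3) - (r : ℝ) ^ ((2 : ℝ) / 3) / 2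
         ≤ ((p.2 - p.1 : ℤ) : ℝ) ∧
       ((p.2 - p.1 : ℤ) : ℝ)
         ≤ 2 * (t + 1) * (r : ℝ) ^ ((2 : ℝ) / 3) + (r : ℝ) ^ ((2 : ℝ) / 3) / 2}

/-- `T^R(γ)`: the passage time of `γ` after discounting (setting to zero) the weights in `R`. -/
noncomputable def TR (ω : Config) (R : Set (ℤ × ℤ)) (γ : List (ℤ × ℤ)) : ℝ :=
  pathTime (Rᶜ.indicator ω) γ

/-- `γ` is an up-right path from `𝐨` to `𝐧` maximizing `T^R`. -/
def IsTRMax (ω : Config) (R : Set (ℤ × ℤ)) (n : ℕ) (γ : List (ℤ × ℤ)) : Prop :=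
  IsUpRightPath γ (0, 0) ((n : ℤ), (n : ℤ)) ∧
    ∀ γ', IsUpRightPath γ' (0, 0) ((n : ℤ), (n : ℤ)) → TR ω R γ' ≤ TR ω R γ

/-- `γ` lies below the rectangle `Rbox r t`: it is disjoint from it, and within the
vertical strip of the rectangle it stays strictly below it. -/
noncomputable def LiesBelow (γ : List (ℤ × ℤ)) (r : ℕ) (t : ℝ) : Prop :=
  (∀ p ∈ γ, p ∉ Rbox r t) ∧
    ∀ p ∈ γ, 2 * (r : ℝ) / 3 ≤ ((p.1 + p.2 : ℤ) : ℝ) → ((p.1 + p.2 : ℤ) : ℝ) ≤ 4 * (r : ℝ) / 3 →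
      ((p.2 - p.1 : ℤ) : ℝ) < 2 * (t + 1) * (r : ℝ) ^ ((2 : ℝ) / 3) - (r : ℝ) ^ ((2 : ℝ) / 3) / 2

end LPP

/-
On the almost sure event where all weights are nonnegative and distinct finite vertex sets have
distinct weight sums, suppose `ψ(Γ_n(r)) < 0 ≤ ψ(Γ^R(r))`. On each antidiagonal take the vertex of
`Γ_n` or `Γ^R` with the larger `ψ` (upper envelope) and the one with the smaller `ψ` (lower
envelope). Both envelopes are up-right paths from `𝐨` to `𝐧`, and together they carry exactly the
weight of `Γ_n` and `Γ^R`. The lower envelope lies weakly below `Γ^R`, hence avoids `R`, so its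
weight is at most `T^R(Γ^R) = ℓ(Γ^R)`; the upper envelope weighs at most `ℓ(Γ_n)`. Hence the upper
envelope is a geodesic as well, so by genericity it has the vertices of `Γ_n`, although it passes
through `Γ^R(r) ≠ Γ_n(r)`.
-/

lemma _root_.List.dropLast_zipWith {α β γ : Type*} (f : α → β → γ) {l : List α} {l' : List β}
    (h : l.length = l'.length) :
    (List.zipWith f l l').dropLast = List.zipWith f l.dropLast l'.dropLast := by
  simp [List.dropLast_eq_take, List.take_zipWith, h]

lemma _root_.List.sum_map_zipWith_add_sum_map_zipWith {α M : Type*} [AddCommMonoid M] (w : α → M)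
    {f g : α → α → α} (hfg : ∀ a b, w (f a b) + w (g a b) = w a + w b) :
    ∀ {l l' : List α}, l.length = l'.length →
      ((List.zipWith f l l').map w).sum + ((List.zipWith g l l').map w).sum =
        (l.map w).sum + (l'.map w).sum
  | [], [], _ => by simp
  | a :: l, b :: l', h => by
    simp only [List.zipWith_cons_cons, List.map_cons, List.sum_cons]
    rw [add_add_add_comm, hfg, List.sum_map_zipWith_add_sum_map_zipWith w hfg
      (by simpa using h), add_add_add_comm]

instance (r : ℝ) : NullSingletonClass (expMeasure r) :=
  ⟨fun _ => withDensity_absolutelyContinuous _ _ (Real.volume_singleton)⟩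

lemma ProbabilityTheory.ae_nonneg_expMeasure (r : ℝ) : ∀ᵐ x ∂expMeasure r, 0 ≤ x := by
  rw [expMeasure, gammaMeasure,
    ae_withDensity_iff (by exact (measurable_gammaPDFReal 1 r).ennreal_ofReal)]
  exact ae_of_all _ fun x hx => not_lt.1 fun h => hx (gammaPDF_of_neg h)

lemma ProbabilityTheory.IndepFun.measure_eq_eq_zero {Ω β : Type*} [MeasurableSpace Ω]
    [MeasurableSpace β] [MeasurableEq β] {μ : Measure Ω} [IsFiniteMeasure μ] {Y Z : Ω → β}
    (hY : Measurable Y) (hZ : Measurable Z) (h : IndepFun Y Z μ) [NullSingletonClass (μ.map Z)] :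
    μ {ω | Y ω = Z ω} = 0 := by
  have hdiag : MeasurableSet {x : β × β | x.1 = x.2} :=
    measurableSet_eq_fun measurable_fst measurable_snd
  change μ ((fun ω => (Y ω, Z ω)) ⁻¹' {x | x.1 = x.2}) = 0
  rw [← Measure.map_apply (hY.prodMk hZ) hdiag,
    (indepFun_iff_map_prod_eq_prod_map_map hY.aemeasurable hZ.aemeasurable).1 h,
    Measure.prod_apply hdiag]
  simp [Set.preimage]

lemma ProbabilityTheory.iIndepFun.indepFun_sum_mul_of_notMem {Ω ι : Type*} [MeasurableSpace Ω]
    {μ : Measure Ω} {X : ι → Ω → ℝ} (hX : iIndepFun X μ) (hXm : ∀ i, Measurable (X i)) (c : ι → ℝ)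
    {F : Finset ι} {s : ι} (hs : s ∉ F) :
    IndepFun (fun ω => ∑ i ∈ F, c i * X i ω) (X s) μ := by
  have h := (hX.indepFun_finset F {s} (Finset.disjoint_singleton_right.2 hs) hXm).comp
    (φ := fun v : F → ℝ => ∑ i : F, c i * v i) (by fun_prop)
    (measurable_pi_apply (⟨s, Finset.mem_singleton_self s⟩ : ({s} : Finset ι)))
  convert h using 1
  · ext ω
    exact (F.sum_coe_sort fun i => c i * X i ω).symm
  · rfl

namespace LPP

lemma UpStep.lt {p q : ℤ × ℤ} (h : UpStep p q) : p < q := by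
  rcases h with rfl | rfl <;> simp [Prod.lt_iff]

lemma UpStep.phi_succ {p q : ℤ × ℤ} (h : UpStep p q) : q.1 + q.2 = p.1 + p.2 + 1 := by
  rcases h with rfl | rfl <;> simp only <;> ring

def upper (p q : ℤ × ℤ) : ℤ × ℤ := if q.2 - q.1 ≤ p.2 - p.1 then p else q

def lower (p q : ℤ × ℤ) : ℤ × ℤ := if q.2 - q.1 ≤ p.2 - p.1 then q else p

lemma upper_self (p : ℤ × ℤ) : upper p p = p := if_pos le_rfl

lemma lower_self (p : ℤ × ℤ) : lower p p = p := by simp [lower]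

lemma upper_add_lower (ω : Config) (p q : ℤ × ℤ) :
    ω (upper p q) + ω (lower p q) = ω p + ω q := by
  unfold upper lower; split_ifs <;> ring

-- Vertices on one antidiagonal have `ψ` of equal parity, so distinct ones are `ψ`-apart by at
-- least 2 and cannot swap order in one step.
lemma upStep_upper {p q p' q' : ℤ × ℤ} (h : p.1 + p.2 = q.1 + q.2) (hp : UpStep p p')
    (hq : UpStep q q') : UpStep (upper p q) (upper p' q') := by
  obtain ⟨a, b⟩ := p; obtain ⟨c, d⟩ := q
  unfold upper UpStep
  rcases hp with rfl | rfl <;> rcases hq with rfl | rfl <;> split_ifs <;>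
    simp only [Prod.mk.injEq, true_or, or_true] at * <;> omega

lemma upStep_lower {p q p' q' : ℤ × ℤ} (h : p.1 + p.2 = q.1 + q.2) (hp : UpStep p p')
    (hq : UpStep q q') : UpStep (lower p q) (lower p' q') := by
  obtain ⟨a, b⟩ := p; obtain ⟨c, d⟩ := q
  unfold lower UpStep
  rcases hp with rfl | rfl <;> rcases hq with rfl | rfl <;> split_ifs <;>
    simp only [Prod.mk.injEq, true_or, or_true] at * <;> omega

namespace IsUpRightPath

variable {γ δ : List (ℤ × ℤ)} {u v p q : ℤ × ℤ}

lemma getElem_zero (hγ : IsUpRightPath γ u v) (h : 0 < γ.length) : γ[0] = u := by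
  simpa [List.head?_eq_getElem?, List.getElem?_eq_getElem h] using hγ.1

lemma getElem_eq_last (hγ : IsUpRightPath γ u v) {k : ℕ} (hk : k < γ.length)
    (hlast : k = γ.length - 1) : γ[k] = v := by
  subst hlast
  simpa [List.getLast?_eq_getElem?, List.getElem?_eq_getElem hk] using hγ.2.1

lemma phi_getElem (hγ : IsUpRightPath γ u v) (k : ℕ) (hk : k < γ.length) :
    γ[k].1 + γ[k].2 = u.1 + u.2 + k := by
  induction k with
  | zero => simp [hγ.getElem_zero hk]
  | succ k ih =>
    rw [(List.isChain_iff_getElem.1 hγ.2.2 k hk).phi_succ, ih (by omega)]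
    push_cast; ring

lemma length_pos (hγ : IsUpRightPath γ u v) : 0 < γ.length :=
  List.length_pos_iff.2 (by rintro rfl; simp [IsUpRightPath] at hγ)

lemma length_eq (hγ : IsUpRightPath γ u v) : (γ.length : ℤ) = v.1 + v.2 - (u.1 + u.2) + 1 := by
  have hpos := hγ.length_pos
  have h := hγ.phi_getElem (γ.length - 1) (by omega)
  rw [hγ.getElem_eq_last _ rfl] at h
  omega

lemma length_eq_length (hγ : IsUpRightPath γ u v) (hδ : IsUpRightPath δ u v) :
    γ.length = δ.length := by
  have := hγ.length_eq; have := hδ.length_eq; omega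

lemma eq_of_mem_of_phi_eq (hγ : IsUpRightPath γ u v) (hp : p ∈ γ) (hq : q ∈ γ)
    (h : p.1 + p.2 = q.1 + q.2) : p = q := by
  obtain ⟨k, hk, rfl⟩ := List.mem_iff_getElem.1 hp
  obtain ⟨l, hl, rfl⟩ := List.mem_iff_getElem.1 hq
  have hkl : k = l := by
    have := hγ.phi_getElem k hk; have := hγ.phi_getElem l hl; omega
  subst hkl; rfl

lemma exists_mem_phi_eq (hγ : IsUpRightPath γ u v) (hδ : IsUpRightPath δ u v) (hp : p ∈ γ) :
    ∃ q ∈ δ, q.1 + q.2 = p.1 + p.2 := by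
  obtain ⟨k, hk, rfl⟩ := List.mem_iff_getElem.1 hp
  have hk' : k < δ.length := hγ.length_eq_length hδ ▸ hk
  exact ⟨δ[k], List.getElem_mem hk', by rw [hγ.phi_getElem k hk, hδ.phi_getElem k hk']⟩

lemma mem_zipWith_of_phi_eq (f : ℤ × ℤ → ℤ × ℤ → ℤ × ℤ) (hγ : IsUpRightPath γ u v)
    (hδ : IsUpRightPath δ u v) (hp : p ∈ γ) (hq : q ∈ δ) (h : p.1 + p.2 = q.1 + q.2) :
    f p q ∈ List.zipWith f γ δ := by
  obtain ⟨k, hk, rfl⟩ := List.mem_iff_getElem.1 hp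
  obtain ⟨l, hl, rfl⟩ := List.mem_iff_getElem.1 hq
  have hkl : k = l := by
    have := hγ.phi_getElem k hk; have := hδ.phi_getElem l hl; omega
  subst hkl
  exact List.mem_iff_getElem.2 ⟨k, by simp [hk, hl], List.getElem_zipWith⟩

lemma exists_of_mem_zipWith {f : ℤ × ℤ → ℤ × ℤ → ℤ × ℤ} {x : ℤ × ℤ}
    (hγ : IsUpRightPath γ u v) (hδ : IsUpRightPath δ u v) (hx : x ∈ List.zipWith f γ δ) :
    ∃ p ∈ γ, ∃ q ∈ δ, p.1 + p.2 = q.1 + q.2 ∧ f p q = x := by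
  obtain ⟨k, hk, rfl⟩ := List.mem_iff_getElem.1 hx
  rw [List.length_zipWith, lt_min_iff] at hk
  exact ⟨γ[k], List.getElem_mem hk.1, δ[k], List.getElem_mem hk.2,
    by rw [hγ.phi_getElem k hk.1, hδ.phi_getElem k hk.2], List.getElem_zipWith.symm⟩

lemma zipWith {f : ℤ × ℤ → ℤ × ℤ → ℤ × ℤ} (hγ : IsUpRightPath γ u v)
    (hδ : IsUpRightPath δ u v)
    (hf : ∀ {p q p' q'}, p.1 + p.2 = q.1 + q.2 → UpStep p p' → UpStep q q' →
      UpStep (f p q) (f p' q'))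
    (hdiag : ∀ p, f p p = p) : IsUpRightPath (List.zipWith f γ δ) u v := by
  have hlen := hγ.length_eq_length hδ
  have hpos := hδ.length_pos
  refine ⟨?_, ?_, List.isChain_iff_getElem.2 fun k hk => ?_⟩
  · rw [List.head?_eq_getElem?, List.getElem?_eq_getElem (by simp [hlen, hpos]),
      List.getElem_zipWith, hγ.getElem_zero, hδ.getElem_zero, hdiag]
  · rw [List.getLast?_eq_getElem?, List.getElem?_eq_getElem (by simp [hlen, hpos]),
      List.getElem_zipWith, hγ.getElem_eq_last _ (by simp [hlen]),
      hδ.getElem_eq_last _ (by simp [hlen]), hdiag]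
  · simp only [List.length_zipWith, ← hlen, min_self] at hk
    simp only [List.getElem_zipWith]
    exact hf (by rw [hγ.phi_getElem k (by omega), hδ.phi_getElem k (by omega)])
      (List.isChain_iff_getElem.1 hγ.2.2 k hk) (List.isChain_iff_getElem.1 hδ.2.2 k (by omega))

lemma pairwise_lt (hγ : IsUpRightPath γ u v) : γ.Pairwise (· < ·) :=
  (hγ.2.2.imp fun _ _ h => h.lt).pairwise

lemma nodup (hγ : IsUpRightPath γ u v) : γ.Nodup :=
  hγ.pairwise_lt.nodup

lemma mem_Icc (hγ : IsUpRightPath γ u v) (hp : p ∈ γ) : u ≤ p ∧ p ≤ v := by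
  obtain ⟨k, hk, rfl⟩ := List.mem_iff_getElem.1 hp
  have hlt := List.pairwise_iff_getElem.1 hγ.pairwise_lt
  constructor
  · rw [← hγ.getElem_zero (by omega)]
    rcases Nat.eq_zero_or_pos k with rfl | h
    · rfl
    · exact (hlt 0 k _ _ h).le
  · rw [← hγ.getElem_eq_last (k := γ.length - 1) (by omega) rfl]
    rcases eq_or_lt_of_le (show k ≤ γ.length - 1 by omega) with rfl | h
    · rfl
    · exact (hlt k _ _ _ h).le

end IsUpRightPath

variable {ω : Config} {γ δ : List (ℤ × ℤ)} {u v p : ℤ × ℤ}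

lemma pathTime_zipWith_add_pathTime_zipWith {f g : ℤ × ℤ → ℤ × ℤ → ℤ × ℤ}
    (hfg : ∀ p q, ω (f p q) + ω (g p q) = ω p + ω q) (h : γ.length = δ.length) :
    pathTime ω (List.zipWith f γ δ) + pathTime ω (List.zipWith g γ δ) =
      pathTime ω γ + pathTime ω δ := by
  simp only [pathTime, List.dropLast_zipWith _ h]
  exact List.sum_map_zipWith_add_sum_map_zipWith ω hfg (by simp [h])

lemma pathTime_eq_sum_toFinset (hγ : γ.Nodup) :
    pathTime ω γ = ∑ p ∈ γ.dropLast.toFinset, ω p :=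
  (List.sum_toFinset ω (hγ.sublist γ.dropLast_sublist)).symm

lemma pathTime_le_sum_Icc (hω : ∀ u, 0 ≤ ω u) (hγ : IsUpRightPath γ u v) :
    pathTime ω γ ≤ ∑ p ∈ Finset.Icc u v, ω p := by
  rw [pathTime_eq_sum_toFinset hγ.nodup]
  refine Finset.sum_le_sum_of_subset_of_nonneg (fun p hp => ?_) fun p _ _ => hω p
  exact Finset.mem_Icc.2 (hγ.mem_Icc (List.mem_of_mem_dropLast (List.mem_toFinset.1 hp)))

lemma IsGeodesic.pathTime_le (hω : ∀ u, 0 ≤ ω u) (hγ : IsGeodesic ω γ u v)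
    (hδ : IsUpRightPath δ u v) : pathTime ω δ ≤ pathTime ω γ :=
  hγ.2 ▸ le_csSup ⟨_, by rintro _ ⟨ε, hε, rfl⟩; exact pathTime_le_sum_Icc hω hε⟩ ⟨δ, hδ, rfl⟩

lemma IsUpRightPath.mem_of_pathTime_eq
    (hω : Function.Injective fun A : Finset (ℤ × ℤ) => ∑ p ∈ A, ω p)
    (hγ : IsUpRightPath γ u v) (hδ : IsUpRightPath δ u v) (h : pathTime ω γ = pathTime ω δ)
    (hp : p ∈ γ) : p ∈ δ := by
  rcases eq_or_ne p v with rfl | hpv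
  · exact List.mem_of_getLast? hδ.2.1
  · have hsets : γ.dropLast.toFinset = δ.dropLast.toFinset :=
      hω (by simpa only [← pathTime_eq_sum_toFinset hγ.nodup, ← pathTime_eq_sum_toFinset hδ.nodup])
    have hp' : p ∈ γ.dropLast :=
      List.mem_dropLast_of_mem_of_ne_getLast? hp (by rw [hγ.2.1]; simpa using hpv)
    exact List.mem_of_mem_dropLast (List.mem_toFinset.1 (hsets ▸ List.mem_toFinset.2 hp'))

lemma TR_eq_pathTime {R : Set (ℤ × ℤ)} (h : ∀ p ∈ γ, p ∉ R) : TR ω R γ = pathTime ω γ := by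
  unfold TR pathTime
  congr 1
  exact List.map_congr_left fun p hp =>
    Set.indicator_of_mem (h p (γ.dropLast_sublist.mem hp)) ω

lemma LiesBelow.notMem_Rbox {r : ℕ} {t : ℝ} {q : ℤ × ℤ} (hγ : LiesBelow γ r t) (hq : q ∈ γ)
    (hφ : p.1 + p.2 = q.1 + q.2) (hψ : p.2 - p.1 ≤ q.2 - q.1) : p ∉ Rbox r t := by
  rintro ⟨h₁, h₂, h₃, -⟩
  rw [hφ] at h₁ h₂
  have hψ' : ((p.2 - p.1 : ℤ) : ℝ) ≤ ((q.2 - q.1 : ℤ) : ℝ) := by exact_mod_cast hψ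
  linarith [hγ.2 q hq h₁ h₂]

section Deterministic

variable {n r : ℕ} {t : ℝ} {γR γn : List (ℤ × ℤ)}

lemma pathTime_zipWith_upper (hω : ∀ u, 0 ≤ ω u) (hmax : IsTRMax ω (Rbox r t) n γR)
    (hbelow : LiesBelow γR r t) (hgeo : IsGeodesic ω γn (0, 0) ((n : ℤ), (n : ℤ))) :
    pathTime ω (List.zipWith upper γn γR) = pathTime ω γn := by
  have hU := hgeo.1.zipWith hmax.1 upStep_upper upper_self
  have hL := hgeo.1.zipWith hmax.1 upStep_lower lower_self
  have hL_avoids : ∀ x ∈ List.zipWith lower γn γR, x ∉ Rbox r t := by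
    intro x hx
    obtain ⟨p, -, q, hq, hpq, rfl⟩ := hgeo.1.exists_of_mem_zipWith hmax.1 hx
    unfold lower
    split_ifs with h
    · exact hbelow.1 q hq
    · exact hbelow.notMem_Rbox hq hpq (by omega)
  have hL_le : pathTime ω (List.zipWith lower γn γR) ≤ pathTime ω γR := by
    rw [← TR_eq_pathTime hL_avoids, ← TR_eq_pathTime hbelow.1]
    exact hmax.2 _ hL
  have hU_le := hgeo.pathTime_le hω hU
  have hsum := pathTime_zipWith_add_pathTime_zipWith (upper_add_lower ω)
    (hgeo.1.length_eq_length hmax.1)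
  linarith

theorem psi_nonneg_of_isTRMax (hω : ∀ u, 0 ≤ ω u)
    (hinj : Function.Injective fun A : Finset (ℤ × ℤ) => ∑ p ∈ A, ω p)
    (hmax : IsTRMax ω (Rbox r t) n γR) (hbelow : LiesBelow γR r t)
    (hψR : ∀ p ∈ γR, p.1 + p.2 = (r : ℤ) → 0 ≤ p.2 - p.1)
    (hgeo : IsGeodesic ω γn (0, 0) ((n : ℤ), (n : ℤ))) :
    ∀ p ∈ γn, p.1 + p.2 = (r : ℤ) → 0 ≤ p.2 - p.1 := by
  intro p hp hpr
  by_contra! hψp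
  obtain ⟨q, hq, hqp⟩ := hgeo.1.exists_mem_phi_eq hmax.1 hp
  have hψq := hψR q hq (hqp.trans hpr)
  have hqU : q ∈ List.zipWith upper γn γR := by
    have h := hgeo.1.mem_zipWith_of_phi_eq upper hmax.1 hp hq hqp.symm
    rwa [upper, if_neg (by omega)] at h
  have hqn : q ∈ γn := (hgeo.1.zipWith hmax.1 upStep_upper upper_self).mem_of_pathTime_eq hinj
    hgeo.1 (pathTime_zipWith_upper hω hmax hbelow hgeo) hqU
  have := hgeo.1.eq_of_mem_of_phi_eq hp hqn hqp.symm
  subst this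
  omega

end Deterministic

namespace IsIIDExp

variable {Ω : Type*} [MeasurableSpace Ω] {P : Measure Ω} {X : ℤ × ℤ → Ω → ℝ}

lemma ae_nonneg (hX : IsIIDExp P X) : ∀ᵐ ω ∂P, ∀ u, 0 ≤ X u ω :=
  ae_all_iff.2 fun u => ae_of_ae_map (hX.1 u).aemeasurable (hX.2.2 u ▸ ae_nonneg_expMeasure 1)

-- `∑_T X - ∑_S X = -X s + ∑_{(S ∪ T) \ {s}} c X` with `c = 𝟙_T - 𝟙_S`, and the last sum is
-- independent of the atomless `X s`.
lemma measure_sum_eq_sum_eq_zero [IsFiniteMeasure P] (hX : IsIIDExp P X)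
    {S T : Finset (ℤ × ℤ)} {s : ℤ × ℤ} (hsS : s ∈ S) (hsT : s ∉ T) :
    P {ω | ∑ u ∈ S, X u ω = ∑ u ∈ T, X u ω} = 0 := by
  classical
  obtain ⟨hXm, hXi, hXlaw⟩ := hX
  set c : ℤ × ℤ → ℝ := fun i => (if i ∈ T then 1 else 0) - if i ∈ S then 1 else 0
  set W : Ω → ℝ := fun ω => ∑ i ∈ (S ∪ T).erase s, c i * X i ω
  have hdecomp : ∀ ω, ∑ u ∈ T, X u ω - ∑ u ∈ S, X u ω = -X s ω + W ω := by
    intro ω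
    have hc : ∑ i ∈ S ∪ T, c i * X i ω = ∑ u ∈ T, X u ω - ∑ u ∈ S, X u ω := by
      simp only [c, sub_mul, ite_mul, one_mul, zero_mul, Finset.sum_sub_distrib,
        Finset.sum_ite_mem, Finset.union_inter_cancel_right, Finset.union_inter_cancel_left]
    have hcs : c s = -1 := by simp [c, hsS, hsT]
    rw [← hc, ← Finset.add_sum_erase _ _ (Finset.mem_union_left T hsS), hcs, neg_one_mul]
  have hW : P {ω | W ω = X s ω} = 0 := by
    have : NullSingletonClass (P.map (X s)) := hXlaw s ▸ inferInstance
    exact IndepFun.measure_eq_eq_zero (Finset.measurable_sum _ fun i _ => (hXm i).const_mul _)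
      (hXm s) (hXi.indepFun_sum_mul_of_notMem hXm c (Finset.notMem_erase s _))
  refine measure_mono_null (fun ω (hω : _ = _) => ?_) hW
  show W ω = X s ω
  linarith [hdecomp ω]

lemma ae_injective_sum [IsFiniteMeasure P] (hX : IsIIDExp P X) :
    ∀ᵐ ω ∂P, Function.Injective fun A : Finset (ℤ × ℤ) => ∑ u ∈ A, X u ω := by
  have hne : ∀ A B : Finset (ℤ × ℤ), ¬A ⊆ B → ∀ᵐ ω ∂P, ∑ u ∈ A, X u ω ≠ ∑ u ∈ B, X u ω := by
    intro A B hAB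
    obtain ⟨s, hsA, hsB⟩ := Finset.not_subset.1 hAB
    simpa only [ae_iff, not_not] using hX.measure_sum_eq_sum_eq_zero hsA hsB
  refine ae_all_iff.2 fun A => ae_all_iff.2 fun B => ?_
  by_cases hAB : A ⊆ B
  · by_cases hBA : B ⊆ A
    · exact ae_of_all _ fun _ _ => hAB.antisymm hBA
    · exact (hne B A hBA).mono fun ω h heq => absurd heq.symm h
  · exact (hne A B hAB).mono fun ω h heq => absurd heq h

end IsIIDExp

theorem ER_subset_E_general
    {Ω : Type*} [MeasurableSpace Ω] (P : Measure Ω) [IsProbabilityMeasure P]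
    (X : ℤ × ℤ → Ω → ℝ) (hX : IsIIDExp P X)
    (n r : ℕ) (t : ℝ) :
    ∀ᵐ ω ∂P,
      ∀ γR γn : List (ℤ × ℤ), IsTRMax (fun w => X w ω) (Rbox r t) n γR →
        LiesBelow γR r t →
        (∀ p ∈ γR, p.1 + p.2 = (r : ℤ) → 0 ≤ p.2 - p.1) →
        IsGeodesic (fun w => X w ω) γn (0, 0) ((n : ℤ), (n : ℤ)) →
        ∀ p ∈ γn, p.1 + p.2 = (r : ℤ) → 0 ≤ p.2 - p.1 := by
  filter_upwards [hX.ae_nonneg, hX.ae_injective_sum] with ω hω hinj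
  exact fun γR γn hmax hbelow hψR hgeo => psi_nonneg_of_isTRMax hω hinj hmax hbelow hψR hgeo

/-- **`E^R ⊆ E`.** Almost surely, if the maximizer `Γ^R` of the discounted passage time lies
below `R` and has `ψ(Γ^R(r)) ≥ 0`, then the geodesic `Γ_n` satisfies `ψ(Γ_n(r)) ≥ 0`:
increasing the weights in `R` from `0` can only increase the transversal fluctuation at `𝓛_r`. -/
theorem ER_subset_E
    {Ω : Type*} [MeasurableSpace Ω] (P : Measure Ω) [IsProbabilityMeasure P]
    (X : ℤ × ℤ → Ω → ℝ) (hX : IsIIDExp P X)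
    (n r : ℕ) (hr : 1 ≤ r) (hrn : r ≤ n) (t : ℝ) (ht : 0 < t) :
    ∀ᵐ ω ∂P,
      ∀ γR γn : List (ℤ × ℤ), IsTRMax (fun w => X w ω) (Rbox r t) n γR →
        LiesBelow γR r t →
        (∀ p ∈ γR, p.1 + p.2 = (r : ℤ) → 0 ≤ p.2 - p.1) →
        IsGeodesic (fun w => X w ω) γn (0, 0) ((n : ℤ), (n : ℤ)) →
        ∀ p ∈ γn, p.1 + p.2 = (r : ℤ) → 0 ≤ p.2 - p.1 :=
  ER_subset_E_general P X hX n r t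

end LPP
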